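/- arXiv:1808.07310 — 2 statements merged into one kernel-verified Lean document; each statement's English description precedes it below -/
import Mathlib

section
/- Let X ⊆ ℂ² be compact and let f = p/q be a rational function on ℂ², where p and q are relatively prime polynomials and q is nonvanishing on X. Suppose Γ = f(X) satisfies R(Γ) = C(Γ). If (z₀,w₀) ∈ h_R(X), then q(z₀,w₀) ≠ 0, the value t₀ = p(z₀,w₀)/q(z₀,w₀) belongs to Γ, and for every polynomial h : ℂ² → ℂ one has |h(z₀,w₀)| ≤ sup_{X_{t₀}} |h|; that is, (z₀,w₀) lies in the polynomial hull of the fiber X_{t₀}. -/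
open Complex Set

/-- Evaluation of a polynomial in two variables at a point of `ℂ × ℂ`. -/
noncomputable def evalP (P : MvPolynomial (Fin 2) ℂ) (x : ℂ × ℂ) : ℂ :=
  MvPolynomial.eval ![x.1, x.2] P

/-- `ψ` belongs to `R(X)`: it is a uniform limit on `X` of rational functions `P/Q`
with `Q` nonvanishing on `X`. -/
def MemRatAlg (X : Set (ℂ × ℂ)) (ψ : ℂ × ℂ → ℂ) : Prop :=
  ∀ ε > 0, ∃ P Q : MvPolynomial (Fin 2) ℂ, (∀ x ∈ X, evalP Q x ≠ 0) ∧
    ∀ x ∈ X, ‖ψ x - evalP P x / evalP Q x‖ < ε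

/-- `ψ` belongs to `R(Γ)` for a compact set `Γ ⊆ ℂ`: uniform limit on `Γ` of
one-variable rational functions with poles off `Γ`. -/
def MemRatAlg1 (Γ : Set ℂ) (ψ : ℂ → ℂ) : Prop :=
  ∀ ε > 0, ∃ P Q : Polynomial ℂ, (∀ t ∈ Γ, Polynomial.eval t Q ≠ 0) ∧
    ∀ t ∈ Γ, ‖ψ t - Polynomial.eval t P / Polynomial.eval t Q‖ < ε
/-- The rational hull of a compact set `X ⊆ ℂ²`. -/
def rationalHull (X : Set (ℂ × ℂ)) : Set (ℂ × ℂ) :=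
  {x | ∀ P : MvPolynomial (Fin 2) ℂ, evalP P x ∈ evalP P '' X}

/-!
Testing membership in the rational hull against `F * C (G x₀) - C (F x₀) * G` shows that for
any polynomials `F, G` some `x ∈ X` satisfies `F x * G x₀ = F x₀ * G x`. Applied to the
homogenizations of a one-variable rational function `r = P / Q`, evaluated at `(p, q)`, this gives
`x ∈ X` with `r (f x) * h x = r (f x₀) * h x₀`. Since `R(Γ) = C(Γ)`, `r` can be chosen uniformly
close on `Γ` to a cutoff equal to `1` at `f x₀` and to `0` on the image of the part of `X` where
`‖h‖` exceeds its supremum `M` over the fiber by `ε`; the identity then forces `‖h x₀‖ ≤ M + ε`.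
-/

lemma evalP_mul (P Q : MvPolynomial (Fin 2) ℂ) (x : ℂ × ℂ) :
    evalP (P * Q) x = evalP P x * evalP Q x :=
  map_mul _ P Q

lemma continuous_evalP (P : MvPolynomial (Fin 2) ℂ) : Continuous (evalP P) :=
  MvPolynomial.continuous_eval P |>.comp <| by fun_prop

open MvPolynomial in
lemma evalP_bind₁_homogenize {P : Polynomial ℂ} {N : ℕ} (hN : P.natDegree ≤ N)
    (p q : MvPolynomial (Fin 2) ℂ) {x : ℂ × ℂ} (hx : evalP q x ≠ 0) :
    evalP (bind₁ ![p, q] (P.homogenize N)) x = P.eval (evalP p x / evalP q x) * evalP q x ^ N := by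
  have hcoords : (fun i => eval ![x.1, x.2] (![p, q] i)) = ![evalP p x, evalP q x] := by
    ext i; fin_cases i <;> rfl
  change eval₂Hom (RingHom.id ℂ) _ (bind₁ _ _) = _
  rw [eval₂Hom_bind₁]
  exact (congrArg (eval · _) hcoords).trans (Polynomial.eval_homogenize hN _ hx)

lemma exists_mul_eq_mul_of_mem_rationalHull {X : Set (ℂ × ℂ)} {x₀ : ℂ × ℂ}
    (hx₀ : x₀ ∈ rationalHull X) (F G : MvPolynomial (Fin 2) ℂ) :
    ∃ x ∈ X, evalP F x * evalP G x₀ = evalP F x₀ * evalP G x := by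
  obtain ⟨x, hxX, hx⟩ :=
    hx₀ (F * MvPolynomial.C (evalP G x₀) - MvPolynomial.C (evalP F x₀) * G)
  refine ⟨x, hxX, ?_⟩
  simp only [evalP, map_sub, map_mul, MvPolynomial.eval_C] at hx ⊢
  linear_combination hx

lemma exists_eval_div_mul_eq_of_mem_rationalHull {X : Set (ℂ × ℂ)} {x₀ : ℂ × ℂ}
    (hx₀ : x₀ ∈ rationalHull X) {p q : MvPolynomial (Fin 2) ℂ}
    (hq : ∀ x ∈ X, evalP q x ≠ 0) (hq₀ : evalP q x₀ ≠ 0) {P Q : Polynomial ℂ}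
    (hQ : ∀ x ∈ X, Q.eval (evalP p x / evalP q x) ≠ 0)
    (hQ₀ : Q.eval (evalP p x₀ / evalP q x₀) ≠ 0) (h : MvPolynomial (Fin 2) ℂ) :
    ∃ x ∈ X, P.eval (evalP p x / evalP q x) / Q.eval (evalP p x / evalP q x) * evalP h x =
      P.eval (evalP p x₀ / evalP q x₀) / Q.eval (evalP p x₀ / evalP q x₀) * evalP h x₀ := by
  set N := max P.natDegree Q.natDegree
  have hP : P.natDegree ≤ N := le_max_left _ _
  have hQN : Q.natDegree ≤ N := le_max_right _ _
  obtain ⟨x, hxX, hx⟩ := exists_mul_eq_mul_of_mem_rationalHull hx₀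
    (MvPolynomial.bind₁ ![p, q] (P.homogenize N) * h) (MvPolynomial.bind₁ ![p, q] (Q.homogenize N))
  refine ⟨x, hxX, ?_⟩
  simp only [evalP_mul, evalP_bind₁_homogenize hP _ _ (hq x hxX),
    evalP_bind₁_homogenize hQN _ _ (hq x hxX), evalP_bind₁_homogenize hP _ _ hq₀,
    evalP_bind₁_homogenize hQN _ _ hq₀] at hx
  have hqN : evalP q x ^ N * evalP q x₀ ^ N ≠ 0 := by
    have := hq x hxX
    positivity
  rw [div_mul_eq_mul_div, div_mul_eq_mul_div, div_eq_div_iff (hQ x hxX) hQ₀]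
  exact mul_right_cancel₀ hqN (by linear_combination hx)

lemma exists_le_norm_mul_of_memRatAlg1 {α : Type*} {X : Set α} {φ : α → ℂ} {u : α → ℝ}
    (hu₀ : ∀ x ∈ X, 0 ≤ u x) (hu : BddAbove (u '' X)) {t₀ : ℂ} (ht₀ : t₀ ∈ φ '' X) {a : ℝ}
    (ha : 0 ≤ a)
    (hrat : ∀ P Q : Polynomial ℂ, (∀ t ∈ φ '' X, Q.eval t ≠ 0) →
      ∃ x ∈ X, ‖P.eval (φ x) / Q.eval (φ x)‖ * u x = ‖P.eval t₀ / Q.eval t₀‖ * a)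
    {g : ℂ → ℂ} (hg : MemRatAlg1 (φ '' X) g) {η : ℝ} (hη : 0 < η) :
    ∃ x ∈ X, ‖g t₀‖ * a - η ≤ ‖g (φ x)‖ * u x := by
  obtain ⟨C, hC⟩ := hu
  set D := max C 0 + a + 1
  have hD : 0 < D := by positivity
  obtain ⟨P, Q, hQ, happrox⟩ := hg (η / D) (by positivity)
  obtain ⟨x, hxX, hx⟩ := hrat P Q hQ
  refine ⟨x, hxX, ?_⟩
  set r := fun t => P.eval t / Q.eval t
  have hx' : ‖r (φ x)‖ * u x = ‖r t₀‖ * a := hx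
  have hr₀ : ‖g t₀‖ ≤ ‖r t₀‖ + η / D := by
    linarith [norm_le_norm_add_norm_sub' (g t₀) (r t₀), happrox t₀ ht₀]
  have hrx : ‖r (φ x)‖ ≤ ‖g (φ x)‖ + η / D := by
    have := happrox (φ x) (mem_image_of_mem φ hxX)
    rw [norm_sub_rev] at this
    linarith [norm_le_norm_add_norm_sub' (r (φ x)) (g (φ x))]
  have hux : u x + a ≤ D := by linarith [hC (mem_image_of_mem u hxX), le_max_left C 0]
  have hux₀ := hu₀ x hxX
  calc ‖g t₀‖ * a - η ≤ (‖r t₀‖ + η / D) * a - η / D * D := by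
        rw [div_mul_cancel₀ _ hD.ne']; gcongr
    _ = ‖r (φ x)‖ * u x + η / D * a - η / D * D := by rw [hx']; ring
    _ ≤ (‖g (φ x)‖ + η / D) * u x + η / D * a - η / D * D := by gcongr
    _ = ‖g (φ x)‖ * u x - η / D * (D - (u x + a)) := by ring
    _ ≤ ‖g (φ x)‖ * u x := by
        have : 0 ≤ η / D * (D - (u x + a)) := mul_nonneg (by positivity) (by linarith)
        linarith

lemma le_sSup_image_fiber_of_forall_continuous {α : Type*} [TopologicalSpace α] {X : Set α}
    (hX : IsCompact X) {φ : α → ℂ} (hφ : ContinuousOn φ X) {u : α → ℝ} (hu : Continuous u)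
    (hu₀ : ∀ x ∈ X, 0 ≤ u x) {t₀ : ℂ} {a : ℝ}
    (h : ∀ g : ℂ → ℂ, Continuous g → ∀ η > 0, ∃ x ∈ X, ‖g t₀‖ * a - η ≤ ‖g (φ x)‖ * u x) :
    a ≤ sSup (u '' {x ∈ X | φ x = t₀}) := by
  set M := sSup (u '' {x ∈ X | φ x = t₀})
  have hbdd : BddAbove (u '' {x ∈ X | φ x = t₀}) :=
    (hX.bddAbove_image hu.continuousOn).mono (image_mono (sep_subset X _))
  have hM₀ : 0 ≤ M := Real.sSup_nonneg (by rintro _ ⟨x, hx, rfl⟩; exact hu₀ x hx.1)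
  refine le_of_forall_pos_lt_add fun ε hε => ?_
  set K := X ∩ {x | M + ε / 2 ≤ u x}
  have hK : IsCompact (φ '' K) :=
    (hX.inter_right (isClosed_le continuous_const hu)).image_of_continuousOn
      (hφ.mono inter_subset_left)
  have ht₀K : t₀ ∉ φ '' K := by
    rintro ⟨x, ⟨hxX, hxu : M + ε / 2 ≤ u x⟩, hx⟩
    linarith [le_csSup hbdd ⟨x, ⟨hxX, hx⟩, rfl⟩]
  obtain ⟨g, hgK, hgt₀, hg01⟩ := exists_continuous_zero_one_of_isClosed hK.isClosed
    isClosed_singleton (disjoint_singleton_right.mpr ht₀K)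
  obtain ⟨x, hxX, hx⟩ := h (fun t => (g t : ℂ)) (by fun_prop) (ε / 2) (by positivity)
  simp only [hgt₀ rfl, Pi.one_apply, ofReal_one, norm_one, one_mul, norm_real,
    Real.norm_eq_abs] at hx
  by_cases hxK : M + ε / 2 ≤ u x
  · rw [hgK (mem_image_of_mem φ ⟨hxX, hxK⟩)] at hx
    simp only [Pi.zero_apply, abs_zero, zero_mul] at hx
    linarith
  · have : |g (φ x)| * u x ≤ u x := by
      rw [abs_of_nonneg (hg01 _).1]
      exact mul_le_of_le_one_left (hu₀ x hxX) (hg01 _).2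
    linarith

theorem rationalHull_subset_fiber_polyHull_general
    (X : Set (ℂ × ℂ)) (hX : IsCompact X)
    (p q : MvPolynomial (Fin 2) ℂ)
    (hq : ∀ x ∈ X, evalP q x ≠ 0)
    (f : ℂ × ℂ → ℂ) (hf : ∀ x, f x = evalP p x / evalP q x)
    (Γ : Set ℂ) (hΓ : Γ = f '' X)
    (hRΓ : ∀ g : ℂ → ℂ, ContinuousOn g Γ → MemRatAlg1 Γ g)
    (x₀ : ℂ × ℂ) (hx₀ : x₀ ∈ rationalHull X) :
    evalP q x₀ ≠ 0 ∧ f x₀ ∈ Γ ∧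
      ∀ h : MvPolynomial (Fin 2) ℂ,
        ‖evalP h x₀‖ ≤
          sSup ((fun x => ‖evalP h x‖) ''
            {x ∈ X | evalP p x = f x₀ * evalP q x}) := by
  subst hΓ
  obtain ⟨x₁, hx₁X, hx₁⟩ := hx₀ q
  have hq₀ : evalP q x₀ ≠ 0 := hx₁ ▸ hq x₁ hx₁X
  have ht₀ : f x₀ ∈ f '' X := by
    obtain ⟨x, hxX, hx⟩ := exists_mul_eq_mul_of_mem_rationalHull hx₀ p q
    exact ⟨x, hxX, by rw [hf, hf, div_eq_div_iff (hq x hxX) hq₀, hx]⟩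
  refine ⟨hq₀, ht₀, fun h => ?_⟩
  have hfiber : {x ∈ X | evalP p x = f x₀ * evalP q x} = {x ∈ X | f x = f x₀} :=
    sep_ext_iff.mpr fun x hx => by rw [hf x, div_eq_iff (hq x hx)]
  have hfcont : ContinuousOn f X := by
    rw [funext hf]
    exact (continuous_evalP p).continuousOn.div (continuous_evalP q).continuousOn hq
  rw [hfiber]
  refine le_sSup_image_fiber_of_forall_continuous hX hfcont (continuous_evalP h).norm
    (fun _ _ => norm_nonneg _) fun g hg η hη => ?_
  refine exists_le_norm_mul_of_memRatAlg1 (fun _ _ => norm_nonneg _)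
    (hX.bddAbove_image (continuous_evalP h).norm.continuousOn) ht₀ (norm_nonneg _)
    (fun P Q hQ => ?_) (hRΓ g hg.continuousOn) hη
  obtain ⟨x, hxX, hx⟩ := exists_eval_div_mul_eq_of_mem_rationalHull hx₀ hq hq₀
    (fun x hx => hf x ▸ hQ _ (mem_image_of_mem f hx)) (hf x₀ ▸ hQ _ ht₀) h
  simp only [hf]
  exact ⟨x, hxX, by rw [← norm_mul, ← norm_mul, hx]⟩

/-- If `X ⊆ ℂ²` is compact, `f = p/q` with `q` nonvanishing on `X`, and `Γ = f(X)` satisfies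
`R(Γ) = C(Γ)`, then every point `(z₀,w₀)` of the rational hull of `X` satisfies
`q(z₀,w₀) ≠ 0`, `t₀ = f(z₀,w₀) ∈ Γ`, and `(z₀,w₀)` lies in the polynomial hull of the
fiber `X_{t₀}`. -/
theorem rationalHull_subset_fiber_polyHull
    (X : Set (ℂ × ℂ)) (hX : IsCompact X)
    (p q : MvPolynomial (Fin 2) ℂ) (hpq : IsCoprime p q)
    (hq : ∀ x ∈ X, evalP q x ≠ 0)
    (f : ℂ × ℂ → ℂ) (hf : ∀ x, f x = evalP p x / evalP q x)
    (Γ : Set ℂ) (hΓ : Γ = f '' X)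
    (hRΓ : ∀ g : ℂ → ℂ, ContinuousOn g Γ → MemRatAlg1 Γ g)
    (x₀ : ℂ × ℂ) (hx₀ : x₀ ∈ rationalHull X) :
    evalP q x₀ ≠ 0 ∧ f x₀ ∈ Γ ∧
      ∀ h : MvPolynomial (Fin 2) ℂ,
        ‖evalP h x₀‖ ≤
          sSup ((fun x => ‖evalP h x‖) ''
            {x ∈ X | evalP p x = f x₀ * evalP q x}) :=
  rationalHull_subset_fiber_polyHull_general X hX p q hq f hf Γ hΓ hRΓ x₀ hx₀
end

section
/- Let 0 < b < a be real numbers, let g(φ) = a + b cos φ and h(φ) = sin φ + i sin 2φ, and fix φ ∈ ℝ with h(φ) ≠ 0. Let C_φ = {(e^{2iθ} g(φ)², e^{iθ} g(φ) h(φ)) : θ ∈ ℝ} ⊆ ℂ², and let F(z,w) = z, so V = {z = 0} is disjoint from C_φ. Then R_V(C_φ) = C(C_φ): every continuous complex-valued function on the circle C_φ is a uniform limit on C_φ of functions of the form G(z,w)/zᵐ with G entire and m ∈ ℕ. -/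
/-!
On `C_φ` the point `(z, w) = (u²g², ugh)` is determined by `u = w/(gh)`, which runs over the
unit circle. Both `u` and `ū = 1/u = gw/(hz)` have the form `G/zᵐ`, and such functions,
restricted to `C_φ`, form a subalgebra of `C(C_φ)` (since `z ≠ 0` there). This subalgebra
contains the star subalgebra generated by the injective function `u`, which is dense by
Stone–Weierstrass.
-/

open Complex Set
/-- `ψ` belongs to `R_V(Y)`, where `V = {F = 0}`: uniform limit on `Y` of functions
`G/F^m` with `G` entire and `m ∈ ℕ`. -/
def MemRVAlg (F : ℂ × ℂ → ℂ) (Y : Set (ℂ × ℂ)) (ψ : ℂ × ℂ → ℂ) : Prop :=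
  ∀ ε > 0, ∃ (G : ℂ × ℂ → ℂ) (m : ℕ), Differentiable ℂ G ∧
    ∀ x ∈ Y, ‖ψ x - G x / (F x) ^ m‖ < ε

/-- `g(φ) = a + b cos φ`, as a complex number. -/
noncomputable def gK (a b : ℝ) (φ : ℝ) : ℂ := ((a + b * Real.cos φ : ℝ) : ℂ)

/-- `h(φ) = sin φ + i sin 2φ`. -/
noncomputable def hK (φ : ℝ) : ℂ := (Real.sin φ : ℂ) + Complex.I * (Real.sin (2 * φ) : ℂ)

/-- The circle `C_φ = {(e^{2iθ} g(φ)², e^{iθ} g(φ) h(φ)) : θ ∈ ℝ}`. -/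
noncomputable def circleC (a b : ℝ) (φ : ℝ) : Set (ℂ × ℂ) :=
  {x | ∃ θ : ℝ, x = (Complex.exp (2 * Complex.I * (θ : ℂ)) * gK a b φ ^ 2,
    Complex.exp (Complex.I * (θ : ℂ)) * gK a b φ * hK φ)}

theorem Subalgebra.topologicalClosure_eq_top_of_injective_of_star_mem {X : Type*}
    [TopologicalSpace X] [CompactSpace X] {A : Subalgebra ℂ C(X, ℂ)} {f : C(X, ℂ)}
    (hf : Function.Injective f) (hf_mem : f ∈ A) (hf_star : star f ∈ A) :
    A.topologicalClosure = ⊤ := by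
  have hle : (StarAlgebra.adjoin ℂ {f}).toSubalgebra ≤ A := by
    rw [StarAlgebra.adjoin_toSubalgebra, Algebra.adjoin_le_iff, Set.star_singleton]
    exact Set.union_subset (Set.singleton_subset_iff.2 hf_mem) (Set.singleton_subset_iff.2 hf_star)
  have hsep : (StarAlgebra.adjoin ℂ {f}).SeparatesPoints := fun x y hxy =>
    ⟨f, ⟨f, StarAlgebra.subset_adjoin ℂ {f} rfl, rfl⟩, hf.ne hxy⟩
  have hclosure := Subalgebra.topologicalClosure_mono hle
  rwa [← StarSubalgebra.topologicalClosure_toSubalgebra_comm,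
    ContinuousMap.starSubalgebra_topologicalClosure_eq_top_of_separatesPoints _ hsep,
    StarSubalgebra.top_toSubalgebra, top_le_iff] at hclosure

section

variable {E : Type*} [NormedAddCommGroup E] [NormedSpace ℂ E] {F : E → ℂ} {Y : Set E}

def rvSubalgebra (hF : Differentiable ℂ F) (hFY : ∀ x ∈ Y, F x ≠ 0) :
    Subalgebra ℂ C(Y, ℂ) where
  carrier := {q | ∃ (G : E → ℂ) (m : ℕ), Differentiable ℂ G ∧ ∀ x : Y, q x = G x / F x ^ m}
  mul_mem' := by
    rintro p q ⟨G₁, m₁, hG₁, hp⟩ ⟨G₂, m₂, hG₂, hq⟩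
    refine ⟨G₁ * G₂, m₁ + m₂, hG₁.mul hG₂, fun x => ?_⟩
    simp only [ContinuousMap.mul_apply, hp, hq, Pi.mul_apply, pow_add, div_mul_div_comm]
  add_mem' := by
    rintro p q ⟨G₁, m₁, hG₁, hp⟩ ⟨G₂, m₂, hG₂, hq⟩
    refine ⟨G₁ * F ^ m₂ + G₂ * F ^ m₁, m₁ + m₂, (hG₁.mul (hF.pow _)).add (hG₂.mul (hF.pow _)),
      fun x => ?_⟩
    have hx := hFY x x.2
    simp only [ContinuousMap.add_apply, hp, hq, Pi.add_apply, Pi.mul_apply, Pi.pow_apply]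
    field_simp
    ring
  algebraMap_mem' r := ⟨fun _ => r, 0, differentiable_const r, fun x => by simp⟩

end

theorem memRVAlg_of_topologicalClosure_eq_top {F : ℂ × ℂ → ℂ} {Y : Set (ℂ × ℂ)}
    [CompactSpace Y] {hF : Differentiable ℂ F} {hFY : ∀ x ∈ Y, F x ≠ 0}
    (hdense : (rvSubalgebra hF hFY).topologicalClosure = ⊤)
    {ψ : ℂ × ℂ → ℂ} (hψ : ContinuousOn ψ Y) : MemRVAlg F Y ψ := by
  intro ε hε
  let ψY : C(Y, ℂ) := ⟨_, hψ.domRestrict⟩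
  have hψY : ψY ∈ closure (rvSubalgebra hF hFY : Set C(Y, ℂ)) := by
    rw [← Subalgebra.topologicalClosure_coe, hdense]
    trivial
  obtain ⟨q, ⟨G, m, hG, hq⟩, hdist⟩ := Metric.mem_closure_iff.mp hψY ε hε
  refine ⟨G, m, hG, fun x hx => ?_⟩
  calc ‖ψ x - G x / F x ^ m‖ = dist (ψY ⟨x, hx⟩) (q ⟨x, hx⟩) := by
        rw [hq, dist_eq_norm]; rfl
    _ ≤ dist ψY q := ContinuousMap.dist_apply_le_dist _
    _ < ε := hdist

theorem memRVAlg_fst_image_sphere {c d : ℂ} (hc : c ≠ 0) (hd : d ≠ 0) {ψ : ℂ × ℂ → ℂ}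
    (hψ : ContinuousOn ψ ((fun u : ℂ => (u ^ 2 * c ^ 2, u * c * d)) '' Metric.sphere 0 1)) :
    MemRVAlg (fun x => x.1) ((fun u : ℂ => (u ^ 2 * c ^ 2, u * c * d)) '' Metric.sphere 0 1)
      ψ := by
  set Y := (fun u : ℂ => (u ^ 2 * c ^ 2, u * c * d)) '' Metric.sphere 0 1
  have : CompactSpace Y :=
    isCompact_iff_compactSpace.mp ((isCompact_sphere 0 1).image (by fun_prop))
  have hfst : ∀ x ∈ Y, x.1 ≠ 0 := by
    rintro _ ⟨u, hu, rfl⟩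
    exact mul_ne_zero (pow_ne_zero _ (ne_zero_of_mem_unit_sphere ⟨u, hu⟩)) (pow_ne_zero _ hc)
  let f : C(Y, ℂ) := ⟨fun x => x.1.2 / (c * d), by fun_prop⟩
  have hf : ∀ (u : ℂ) (hu : u ∈ Metric.sphere 0 1), f ⟨_, mem_image_of_mem _ hu⟩ = u := by
    intro u _
    simp only [f, ContinuousMap.coe_mk]
    field_simp
  refine memRVAlg_of_topologicalClosure_eq_top (hF := differentiable_fst) (hFY := hfst) ?_ hψ
  refine Subalgebra.topologicalClosure_eq_top_of_injective_of_star_mem (f := f) ?_ ?_ ?_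
  · rintro ⟨_, u, hu, rfl⟩ ⟨_, v, hv, rfl⟩ huv
    rw [hf u hu, hf v hv] at huv
    subst huv
    rfl
  · exact ⟨fun x => x.2 / (c * d), 0, by fun_prop, fun x => by simp [f]⟩
  · refine ⟨fun x => c * x.2 / d, 1, by fun_prop, ?_⟩
    rintro ⟨_, u, hu, rfl⟩
    have hu0 : u ≠ 0 := ne_zero_of_mem_unit_sphere ⟨u, hu⟩
    rw [ContinuousMap.star_apply, hf u hu, Complex.star_def,
      ← Complex.inv_eq_conj (by simpa using hu)]
    field_simp

theorem circleC_eq_image (a b φ : ℝ) :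
    circleC a b φ = (fun u : ℂ => (u ^ 2 * gK a b φ ^ 2, u * gK a b φ * hK φ)) ''
      Metric.sphere 0 1 := by
  have hsq (θ : ℝ) : Complex.exp (I * θ) ^ 2 = Complex.exp (2 * I * θ) := by
    rw [← Complex.exp_nat_mul]; ring_nf
  ext x
  constructor
  · rintro ⟨θ, rfl⟩
    exact ⟨Complex.exp (I * θ), by simp [Complex.norm_exp_I_mul_ofReal], by simp only [hsq]⟩
  · rintro ⟨u, hu, rfl⟩
    have hu' : Complex.exp (I * u.arg) = u := by
      simpa [mul_comm I, show ‖u‖ = 1 by simpa using hu] using Complex.norm_mul_exp_arg_mul_I u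
    exact ⟨u.arg, by rw [← hsq, hu']⟩

theorem gK_ne_zero {a b : ℝ} (hab : |b| < a) (φ : ℝ) : gK a b φ ≠ 0 := by
  have hcos : |b * Real.cos φ| ≤ |b| := by
    rw [abs_mul]
    exact mul_le_of_le_one_right (abs_nonneg b) (Real.abs_cos_le_one φ)
  have : 0 < a + b * Real.cos φ := by linarith [neg_abs_le (b * Real.cos φ)]
  exact Complex.ofReal_ne_zero.mpr this.ne'

/-- For `F(z,w) = z`, so that `V = {z = 0}` avoids `C_φ`, one has `R_V(C_φ) = C(C_φ)`:
every continuous function on the circle `C_φ` is a uniform limit on `C_φ` of functions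
`G(z,w)/zᵐ` with `G` entire and `m ∈ ℕ`. -/
theorem RV_circleC_eq_continuous (a b : ℝ) (hb : 0 < b) (hab : b < a)
    (φ : ℝ) (hφ : hK φ ≠ 0)
    (ψ : ℂ × ℂ → ℂ) (hψ : ContinuousOn ψ (circleC a b φ)) :
    MemRVAlg (fun x => x.1) (circleC a b φ) ψ := by
  have hg : gK a b φ ≠ 0 := gK_ne_zero (abs_lt.mpr ⟨by linarith, hab⟩) φ
  rw [circleC_eq_image] at hψ ⊢
  exact memRVAlg_fst_image_sphere hg hφ hψ
end
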